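/- arXiv:2004.12514 — 2 statements merged into one kernel-verified Lean document; each statement's English description precedes it below -/
import Mathlib

section
/- Define W(n) = exp(V(n))/S(n). If ω_i ∈ [κ, 1-κ] for all i with 0 < κ < 1/2, then for every n ≥ 1, W(n) ≤ ((1-2κ)/κ) · (1 - (κ/(1-κ))^n)^{-1} ≤ (1-κ)/κ. -/
/-- Potential `V ω n = ∑_{i=1}^n log ((1-ω i)/ω i)` for `n ≥ 0`. -/
noncomputable def V (ω : ℤ → ℝ) (n : ℕ) : ℝ :=
  ∑ i ∈ Finset.Icc 1 n, Real.log ((1 - ω i) / ω i)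

/-- Lyapunov functional `S ω n = ∑_{i=0}^{n-1} exp (V ω i)`. -/
noncomputable def S (ω : ℤ → ℝ) (n : ℕ) : ℝ :=
  ∑ i ∈ Finset.range n, Real.exp (V ω i)

/-- `W ω n = exp (V ω n) / S ω n`. -/
noncomputable def W (ω : ℤ → ℝ) (n : ℕ) : ℝ := Real.exp (V ω n) / S ω n

lemma aux_sum (r : ℝ) (n : ℕ) :
    ∑ i ∈ Finset.range n, r ^ (n - i) = r * ∑ i ∈ Finset.range n, r ^ i := by
  induction n with
  | zero => simp
  | succ n ih =>
    rw [Finset.sum_range_succ' (fun i => r ^ (n + 1 - i)) n]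
    simp only [Nat.succ_sub_succ] at *
    rw [Finset.sum_range_succ (fun i => r ^ i) n, ih, Nat.sub_zero]
    ring

theorem stmt2 (κ : ℝ) (hκ0 : 0 < κ) (hκ : κ < 1 / 2) (ω : ℤ → ℝ)
    (hω : ∀ i : ℤ, κ ≤ ω i ∧ ω i ≤ 1 - κ) (n : ℕ) (hn : 1 ≤ n) :
    W ω n ≤ ((1 - 2 * κ) / κ) * (1 - (κ / (1 - κ)) ^ n)⁻¹ ∧
    ((1 - 2 * κ) / κ) * (1 - (κ / (1 - κ)) ^ n)⁻¹ ≤ (1 - κ) / κ := by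
  have h1κ : 0 < 1 - κ := by linarith
  set r := κ / (1 - κ) with hrdef
  have hr0 : 0 < r := div_pos hκ0 h1κ
  have hr1 : r < 1 := (div_lt_one h1κ).mpr (by linarith)
  -- bounds on ρ
  have hρ : ∀ j : ℤ, 0 < (1 - ω j) / ω j ∧ (1 - ω j) / ω j ≤ r⁻¹ := by
    intro j
    obtain ⟨h1, h2⟩ := hω j
    have hω0 : 0 < ω j := lt_of_lt_of_le hκ0 h1
    have hω1 : 0 < 1 - ω j := by linarith
    constructor
    · exact div_pos hω1 hω0
    · rw [hrdef, inv_div]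
      exact div_le_div₀ (by linarith) (by linarith) hκ0 h1
  -- key exponential bound
  have key : ∀ i, i ≤ n → Real.exp (V ω n) * r ^ (n - i) ≤ Real.exp (V ω i) := by
    intro i hi
    have hV : V ω n = V ω i + ∑ j ∈ Finset.Ioc (i : ℕ) n, Real.log ((1 - ω j) / ω j) := by
      unfold V
      rw [show (1 : ℕ) = 0 + 1 from rfl, Finset.Icc_add_one_left_eq_Ioc, Finset.Icc_add_one_left_eq_Ioc]
      exact (Finset.sum_Ioc_consecutive _ (Nat.zero_le i) hi).symm
    have hsum : ∑ j ∈ Finset.Ioc (i : ℕ) n, Real.log ((1 - ω j) / ω j)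
        ≤ (n - i : ℕ) * Real.log r⁻¹ := by
      have := Finset.sum_le_card_nsmul (Finset.Ioc i n)
        (fun j => Real.log ((1 - ω j) / ω j)) (Real.log r⁻¹)
        (fun j _ => Real.log_le_log (hρ j).1 (hρ j).2)
      simpa [Nat.card_Ioc, nsmul_eq_mul] using this
    have hlog : Real.log (r ^ (n - i)) = (n - i : ℕ) * Real.log r := by
      rw [Real.log_pow]
    have hpow : r ^ (n - i) = Real.exp ((n - i : ℕ) * Real.log r) := by
      rw [← hlog, Real.exp_log (pow_pos hr0 _)]
    rw [hpow, ← Real.exp_add, Real.exp_le_exp]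
    rw [Real.log_inv] at hsum
    nlinarith [hsum, hV]
  set G := ∑ i ∈ Finset.range n, r ^ i with hGdef
  have hG0 : 0 < G := by
    apply Finset.sum_pos (fun i _ => pow_pos hr0 i)
    exact ⟨0, Finset.mem_range.mpr (by omega)⟩
  have hS0 : 0 < S ω n := by
    apply Finset.sum_pos (fun i _ => Real.exp_pos _)
    exact ⟨0, Finset.mem_range.mpr (by omega)⟩
  have hSge : Real.exp (V ω n) * (r * G) ≤ S ω n := by
    have : ∑ i ∈ Finset.range n, Real.exp (V ω n) * r ^ (n - i) ≤ S ω n := by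
      apply Finset.sum_le_sum
      intro i hi
      exact key i (le_of_lt (Finset.mem_range.mp hi))
    calc Real.exp (V ω n) * (r * G)
        = ∑ i ∈ Finset.range n, Real.exp (V ω n) * r ^ (n - i) := by
          rw [← Finset.mul_sum, aux_sum]
      _ ≤ S ω n := this
  have hrn : r ^ n < 1 := pow_lt_one₀ hr0.le hr1 (by omega)
  have hArn : 0 < 1 - r ^ n := by linarith
  have hW : W ω n ≤ (r * G)⁻¹ := by
    have hpos : 0 < Real.exp (V ω n) * (r * G) :=
      mul_pos (Real.exp_pos _) (mul_pos hr0 hG0)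
    have h1 : W ω n ≤ Real.exp (V ω n) / (Real.exp (V ω n) * (r * G)) := by
      unfold W
      exact div_le_div_of_nonneg_left (Real.exp_pos _).le hpos hSge
    have h2 : Real.exp (V ω n) / (Real.exp (V ω n) * (r * G)) = (r * G)⁻¹ := by
      rw [eq_comm, inv_eq_iff_eq_inv, eq_comm, inv_div]
      field_simp
    rwa [h2] at h1
  have hGeq : G = (1 - r ^ n) / (1 - r) := by
    rw [hGdef, geom_sum_eq hr1.ne n]
    rw [div_eq_div_iff (by linarith) (by linarith)]
    ring
  have hκne : κ ≠ 0 := hκ0.ne'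
  have h1κne : (1 - κ) ≠ 0 := h1κ.ne'
  have hrr : (1 - r) / r = (1 - 2 * κ) / κ := by
    rw [hrdef]
    field_simp
    ring
  have hfirst : (r * G)⁻¹ = ((1 - 2 * κ) / κ) * (1 - r ^ n)⁻¹ := by
    rw [hGeq, ← hrr]
    have hAne : (1 - r ^ n) ≠ 0 := hArn.ne'
    have hrne : (1 - r) ≠ 0 := by linarith [hr1]
    field_simp
    try ring
  have hsecond : ((1 - 2 * κ) / κ) * (1 - r ^ n)⁻¹ ≤ (1 - κ) / κ := by
    have h2κ : 0 < 1 - 2 * κ := by linarith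
    have hrnr : r ^ n ≤ r := by
      calc r ^ n ≤ r ^ 1 := pow_le_pow_of_le_one hr0.le hr1.le hn
        _ = r := pow_one r
    have hmono : (1 - r ^ n)⁻¹ ≤ (1 - r)⁻¹ := by
      apply inv_anti₀ (by linarith)
      linarith
    have h1r : 1 - r = (1 - 2 * κ) / (1 - κ) := by
      rw [hrdef]; field_simp; ring
    have heq : ((1 - 2 * κ) / κ) * (1 - r)⁻¹ = (1 - κ) / κ := by
      rw [h1r]
      rw [inv_div]
      field_simp
    calc ((1 - 2 * κ) / κ) * (1 - r ^ n)⁻¹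
        ≤ ((1 - 2 * κ) / κ) * (1 - r)⁻¹ := by
          apply mul_le_mul_of_nonneg_left hmono
          positivity
      _ = (1 - κ) / κ := heq
  exact ⟨le_trans hW (le_of_eq hfirst), hsecond⟩
end

section
/- Let X be a real random variable with log-moment generating function Λ(λ) = log E[e^{λX}] finite and strictly convex on ℝ, with Λ analytic, and let I_m(x) = sup_λ (λx − Λ(λ)) be its Legendre transform. Suppose s ∈ (1, ∞) satisfies Λ(s) = 0 (i.e. E[e^{sX}] = 1) and s = sup{θ > 0 : E[e^{θX}] ≤ 1}. Then inf_{z > 0} I_m(z)/z = s. -/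
open MeasureTheory

theorem stmt14 {Ω : Type*} [MeasurableSpace Ω] (μ : Measure Ω) [IsProbabilityMeasure μ]
    (X : Ω → ℝ) (hX : Measurable X)
    (hint : ∀ lam : ℝ, Integrable (fun w => Real.exp (lam * X w)) μ)
    (Λ : ℝ → ℝ) (hΛ : ∀ lam : ℝ, Λ lam = Real.log (∫ w, Real.exp (lam * X w) ∂μ))
    (hconv : StrictConvexOn ℝ Set.univ Λ) (hanal : AnalyticOn ℝ Λ Set.univ)
    (Im : ℝ → EReal) (hIm : ∀ x : ℝ, Im x = ⨆ lam : ℝ, ((lam * x - Λ lam : ℝ) : EReal))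
    (s : ℝ) (hs1 : 1 < s) (hroot : Λ s = 0)
    (hsup : s = sSup {θ : ℝ | 0 < θ ∧ ∫ w, Real.exp (θ * X w) ∂μ ≤ 1}) :
    ⨅ z ∈ Set.Ioi (0 : ℝ), Im z * ((z⁻¹ : ℝ) : EReal) = (s : EReal) := by
  have hs0 : (0:ℝ) < s := lt_trans one_pos hs1
  have hΛ0 : Λ 0 = 0 := by
    rw [hΛ 0]
    simp
  have hdiff : ∀ x : ℝ, DifferentiableAt ℝ Λ x := by
    intro x
    exact (hanal.differentiableOn).differentiableAt (by simp [Filter.univ_mem])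
  set d := deriv Λ s with hd
  have hdpos : 0 < d := by
    have h := hconv.slope_lt_deriv (Set.mem_univ 0) (Set.mem_univ s) hs0 (hdiff s)
    rw [slope_def_field, hroot, hΛ0] at h
    simpa using h
  have htan : ∀ lam : ℝ, lam * d - Λ lam ≤ s * d := by
    intro lam
    rcases lt_trichotomy lam s with h | h | h
    · have h2 := hconv.convexOn.slope_le_deriv (Set.mem_univ lam) (Set.mem_univ s) h (hdiff s)
      rw [slope_def_field, hroot] at h2
      have hpos : 0 < s - lam := sub_pos.2 h
      have := (div_le_iff₀ hpos).1 h2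
      nlinarith
    · rw [h, hroot]; linarith
    · have h2 := hconv.convexOn.deriv_le_slope (Set.mem_univ s) (Set.mem_univ lam) h (hdiff s)
      rw [slope_def_field, hroot] at h2
      have hpos : 0 < lam - s := sub_pos.2 h
      have := (le_div_iff₀ hpos).1 h2
      nlinarith
  -- value at z = d : Im d = s * d
  have hImd : Im d = ((s * d : ℝ) : EReal) := by
    rw [hIm d]
    apply le_antisymm
    · exact iSup_le fun lam => EReal.coe_le_coe_iff.2 (htan lam)
    · have : ((s * d - Λ s : ℝ) : EReal) ≤ ⨆ lam : ℝ, ((lam * d - Λ lam : ℝ) : EReal) :=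
        le_iSup (fun lam : ℝ => ((lam * d - Λ lam : ℝ) : EReal)) s
      simpa [hroot] using this
  -- lower bound : for each z > 0, s ≤ Im z * z⁻¹
  have hlow : ∀ z : ℝ, 0 < z → (s : EReal) ≤ Im z * ((z⁻¹ : ℝ) : EReal) := by
    intro z hz
    have h1 : ((s * z : ℝ) : EReal) ≤ Im z := by
      rw [hIm z]
      have : ((s * z - Λ s : ℝ) : EReal) ≤ ⨆ lam : ℝ, ((lam * z - Λ lam : ℝ) : EReal) :=
        le_iSup (fun lam : ℝ => ((lam * z - Λ lam : ℝ) : EReal)) s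
      simpa [hroot] using this
    have h2 : ((s * z : ℝ) : EReal) * ((z⁻¹ : ℝ) : EReal) ≤ Im z * ((z⁻¹ : ℝ) : EReal) :=
      mul_le_mul_of_nonneg_right h1 (by exact_mod_cast (inv_nonneg.2 hz.le))
    have h3 : ((s * z : ℝ) : EReal) * ((z⁻¹ : ℝ) : EReal) = (s : EReal) := by
      rw [← EReal.coe_mul]
      congr 1
      field_simp
    rwa [h3] at h2
  apply le_antisymm
  · have hmem : d ∈ Set.Ioi (0:ℝ) := hdpos
    have : ⨅ z ∈ Set.Ioi (0 : ℝ), Im z * ((z⁻¹ : ℝ) : EReal) ≤ Im d * ((d⁻¹ : ℝ) : EReal) :=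
      biInf_le _ hmem
    have heq : Im d * ((d⁻¹ : ℝ) : EReal) = (s : EReal) := by
      rw [hImd, ← EReal.coe_mul]
      congr 1
      field_simp
    rwa [heq] at this
  · exact le_iInf fun z => le_iInf fun hz => hlow z hz
end
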